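/- Let E be a locally compact, second-countable Hausdorff topological space. For n ≥ 0 let x_n : [0,∞) → [0,∞) be nondecreasing functions with x_n(0) = 0 and x_n(t) → ∞ as t → ∞, such that x_0 is continuous and x_n → x_0 uniformly on compact subsets of [0,∞). Let (m_n)_{n≥0} be Radon measures on [0,∞) × E such that m_n → m_0 vaguely, i.e., ∫ g dm_n → ∫ g dm_0 for every continuous compactly supported g : [0,∞)×E → [0,∞). Then for every continuous compactly supported f : [0,∞) × E → [0,∞), ∫ f(x_n(u), v) m_n(du, dv) → ∫ f(x_0(u), v) m_0(du, dv) as n → ∞. (This is the continuity, at points (x, m) with x continuous, of the time-change map T₁m(f) = ∬ f(x(u), v) m(du, dv); for nondecreasing functions with continuous limit, Skorokhod convergence coincides with locally uniform convergence.) -/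

import Mathlib

open MeasureTheory Filter Set Topology
open scoped NNReal ENNReal

/-!
Everything happens on one compact set. If `f` vanishes unless `u ≤ B`, pick `T` with
`x₀ T > B`; since `xₙ T → x₀ T` and the `xₙ` are nondecreasing, for large `n` every integrand
`f (xₙ u, v)` vanishes off `C = [0, T] × π₂(supp f)`. On `C` the integrands converge uniformly,
because `f` is uniformly continuous for a metric on the metrizable space `E`, and vague convergence
keeps `mₙ(C)` bounded (test it against an Urysohn function). Hence
`∫ f (xₙ u, v) dmₙ - ∫ f (x₀ u, v) dmₙ → 0`, and the last integral tends to
`∫ f (x₀ u, v) dm₀` because `(u, v) ↦ f (x₀ u, v)` is continuous with compact support.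
-/

theorem UniformContinuous.tendstoUniformlyOn_comp_prodMap {ι α β γ δ : Type*} [UniformSpace α]
    [UniformSpace β] [UniformSpace γ] {f : α × β → γ} (hf : UniformContinuous f)
    {x : ι → δ → α} {x₀ : δ → α} {l : Filter ι} {S : Set δ} (hx : TendstoUniformlyOn x x₀ l S) :
    TendstoUniformlyOn (fun n p => f (x n p.1, p.2)) (fun p : δ × β => f (x₀ p.1, p.2)) l
      (S ×ˢ univ) := by
  have hsnd : TendstoUniformlyOn (fun (_ : ι) (p : δ × β) => p.2) Prod.snd l (S ×ˢ univ) :=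
    fun u hu => Eventually.of_forall fun _ _ _ => refl_mem_uniformity hu
  rw [prod_univ] at hsnd ⊢
  exact fun u hu => (hf.comp_tendstoUniformlyOn ((hx.comp Prod.fst).prodMk hsnd) u hu).diag_of_prod

theorem support_comp_prodMap_subset {α β γ M : Type*} [LinearOrder α] [LinearOrder β] [Zero M]
    {f : β × γ → M} {y : α → β} {B : β} {T : α} {K : Set γ} (hy : Monotone y) (hT : B < y T)
    (hf : Function.support f ⊆ Iic B ×ˢ K) :
    Function.support (fun p : α × γ => f (y p.1, p.2)) ⊆ Iic T ×ˢ K := by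
  rintro ⟨u, v⟩ hp
  obtain ⟨hu, hv⟩ := hf hp
  exact ⟨le_of_not_gt fun hTu => (hT.trans_le (hy hTu.le)).not_ge hu, hv⟩

def TendstoVaguely {ι X : Type*} [TopologicalSpace X] [MeasurableSpace X] (μ : ι → Measure X)
    (l : Filter ι) (ν : Measure X) : Prop :=
  ∀ g : X → ℝ, Continuous g → HasCompactSupport g → (∀ p, 0 ≤ g p) →
    Tendsto (fun n => ∫ p, g p ∂(μ n)) l (𝓝 (∫ p, g p ∂ν))

theorem TendstoVaguely.isBoundedUnder_measureReal {ι X : Type*} [TopologicalSpace X]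
    [T2Space X] [LocallyCompactSpace X] [MeasurableSpace X] [OpensMeasurableSpace X]
    {μ : ι → Measure X} {l : Filter ι} {ν : Measure X} [∀ n, IsFiniteMeasureOnCompacts (μ n)]
    (hμν : TendstoVaguely μ l ν) {K : Set X} (hK : IsCompact K) :
    IsBoundedUnder (· ≤ ·) l fun n => (μ n).real K := by
  obtain ⟨h, hhK, -, hh, hh01⟩ :=
    exists_continuous_one_zero_of_isCompact hK isClosed_empty (disjoint_empty K)
  have hle : ∀ n, (μ n).real K ≤ ∫ p, h p ∂(μ n) := fun n => by
    rw [← integral_indicator_one hK.measurableSet]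
    exact integral_mono (integrable_indicator_iff hK.measurableSet |>.2
      (integrableOn_const (hK.measure_lt_top).ne))
      (h.continuous.integrable_of_hasCompactSupport hh)
      (indicator_le' (fun p hp => (hhK hp).ge) fun p _ => (hh01 p).1)
  exact ((hμν h h.continuous hh fun p => (hh01 p).1).isBoundedUnder_le).mono_le
    (Eventually.of_forall hle)

theorem tendsto_integral_sub_of_tendstoUniformlyOn {ι X V : Type*} [MeasurableSpace X]
    [NormedAddCommGroup V] [NormedSpace ℝ V] {μ : ι → Measure X} {l : Filter ι}
    {F : ι → X → V} {G : X → V} {C : Set X} (hC : MeasurableSet C) (hμC : ∀ n, μ n C < ∞)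
    (hbdd : IsBoundedUnder (· ≤ ·) l fun n => (μ n).real C)
    (hF : ∀ n, AEStronglyMeasurable (F n) (μ n)) (hG : ∀ n, Integrable G (μ n))
    (hFG : TendstoUniformlyOn F G l C) (hFC : ∀ᶠ n in l, Function.support (F n) ⊆ C)
    (hGC : Function.support G ⊆ C) :
    Tendsto (fun n => ∫ p, F n p ∂(μ n) - ∫ p, G p ∂(μ n)) l (𝓝 0) := by
  obtain ⟨M, hM⟩ := hbdd
  rw [Metric.tendsto_nhds]
  intro ε hε
  set δ := ε / (|M| + 1)
  have hδ : 0 < δ := by positivity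
  filter_upwards [Metric.tendstoUniformlyOn_iff.1 hFG δ hδ, hM, hFC] with n hclose hmass hsupp
  have hsub : Function.support (F n - G) ⊆ C :=
    (Function.support_sub _ _).trans (union_subset hsupp hGC)
  have hnorm : ∀ p ∈ C, ‖F n p - G p‖ ≤ δ := fun p hp => by
    rw [← dist_eq_norm, dist_comm]
    exact (hclose p hp).le
  have hint : Integrable (F n - G) (μ n) :=
    (integrableOn_iff_integrable_of_support_subset hsub).1 <|
      Measure.integrableOn_of_bounded (hμC n).ne ((hF n).sub (hG n).1)
        ((ae_restrict_iff' hC).2 (Eventually.of_forall hnorm))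
  rw [dist_zero_right]
  calc ‖∫ p, F n p ∂(μ n) - ∫ p, G p ∂(μ n)‖ = ‖∫ p in C, F n p - G p ∂(μ n)‖ := by
        rw [← integral_sub (by simpa using hint.add (hG n)) (hG n),
          setIntegral_eq_integral_of_forall_compl_eq_zero (f := fun p => F n p - G p) fun p hp =>
            Function.notMem_support.1 (mt (@hsub p) hp)]
    _ ≤ δ * (μ n).real C := norm_setIntegral_le_of_norm_le_const (hμC n) hnorm
    _ ≤ δ * |M| := by gcongr; exact hmass.trans (le_abs_self M)
    _ < ε := by
        rw [div_mul_eq_mul_div, div_lt_iff₀ (by positivity)]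
        exact mul_lt_mul_of_pos_left (lt_add_one _) hε

theorem statement13_general {E : Type*} [TopologicalSpace E] [LocallyCompactSpace E]
    [SecondCountableTopology E] [T2Space E] [MeasurableSpace E] [BorelSpace E]
    (x : ℕ → ℝ≥0 → ℝ≥0)
    (hmono : ∀ n, Monotone (x n))
    (hinf : ∀ n, Tendsto (x n) atTop atTop)
    (hcont : Continuous (x 0))
    (hunif : ∀ C : Set ℝ≥0, IsCompact C → TendstoUniformlyOn (fun n => x n) (x 0) atTop C)
    (m : ℕ → Measure (ℝ≥0 × E))
    (hradon : ∀ n, ∀ C : Set (ℝ≥0 × E), IsCompact C → m n C < ⊤)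
    (hvague : ∀ g : ℝ≥0 × E → ℝ, Continuous g → HasCompactSupport g → (∀ p, 0 ≤ g p) →
      Tendsto (fun n => ∫ p, g p ∂(m n)) atTop (𝓝 (∫ p, g p ∂(m 0))))
    (f : ℝ≥0 × E → ℝ) (hf : Continuous f) (hfc : HasCompactSupport f)
    (hfpos : ∀ p, 0 ≤ f p) :
    Tendsto (fun n => ∫ p, f (x n p.1, p.2) ∂(m n)) atTop
      (𝓝 (∫ p, f (x 0 p.1, p.2) ∂(m 0))) := by
  let _ : MetricSpace E := TopologicalSpace.metrizableSpaceMetric E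
  have _ : ∀ n, IsFiniteMeasureOnCompacts (m n) := fun n => ⟨hradon n⟩
  obtain ⟨B, hB⟩ := (hfc.image continuous_fst).bddAbove
  obtain ⟨T, hT⟩ := ((hinf 0).eventually_gt_atTop B).exists
  set K := Prod.snd '' tsupport f
  have hfK : Function.support f ⊆ Iic B ×ˢ K :=
    (subset_tsupport f).trans <| subset_fst_image_prod_snd_image.trans <|
      prod_mono (mem_upperBounds_iff_subset_Iic.1 hB) le_rfl
  have hIic : IsCompact (Iic T) := by
    rw [← Icc_bot]; exact isCompact_Icc
  have hC : IsCompact (Iic T ×ˢ K) := hIic.prod (hfc.image continuous_snd)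
  have hxT : ∀ᶠ n in atTop, B < x n T :=
    ((hunif {T} isCompact_singleton).tendsto_at rfl).eventually (lt_mem_nhds hT)
  have hG : Continuous fun p : ℝ≥0 × E => f (x 0 p.1, p.2) :=
    hf.comp ((hcont.comp continuous_fst).prodMk continuous_snd)
  have hGsupp := support_comp_prodMap_subset (hmono 0) hT hfK
  have hGc : HasCompactSupport fun p : ℝ≥0 × E => f (x 0 p.1, p.2) :=
    hC.of_isClosed_subset isClosed_closure (closure_minimal hGsupp hC.isClosed)
  have hFmeas : ∀ n, Measurable fun p : ℝ≥0 × E => f (x n p.1, p.2) := fun n =>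
    hf.measurable.comp (((hmono n).measurable.comp measurable_fst).prodMk measurable_snd)
  have hFunif := ((hfc.uniformContinuous_of_continuous hf).tendstoUniformlyOn_comp_prodMap
    (hunif (Iic T) hIic)).mono (prod_mono le_rfl (subset_univ K))
  have hdiff := tendsto_integral_sub_of_tendstoUniformlyOn hC.measurableSet
    (fun n => hradon n _ hC) (TendstoVaguely.isBoundedUnder_measureReal hvague hC)
    (fun n => (hFmeas n).aestronglyMeasurable) (fun n => hG.integrable_of_hasCompactSupport hGc)
    hFunif (hxT.mono fun n hn => support_comp_prodMap_subset (hmono n) hn hfK) hGsupp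
  simpa using hdiff.add (hvague _ hG hGc fun p => hfpos _)

/-- **Lemma 4.1 of Resnick–Zeber (continuity of the time-change map).**
Let `E` be a locally compact, second-countable Hausdorff space.  For `n ≥ 0` let
`x_n : [0,∞) → [0,∞)` be nondecreasing with `x_n(0) = 0` and `x_n(t) → ∞`, such that `x_0`
is continuous and `x_n → x_0` uniformly on compacts, and let `(m_n)` be Radon measures on
`[0,∞) × E` with `m_n → m_0` vaguely.  Then for every nonnegative continuous compactly
supported `f` on `[0,∞) × E`,
`∫ f(x_n(u), v) m_n(du, dv) → ∫ f(x_0(u), v) m_0(du, dv)` as `n → ∞`. -/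
theorem statement13 {E : Type*} [TopologicalSpace E] [LocallyCompactSpace E]
    [SecondCountableTopology E] [T2Space E] [MeasurableSpace E] [BorelSpace E]
    (x : ℕ → ℝ≥0 → ℝ≥0)
    (hmono : ∀ n, Monotone (x n)) (hzero : ∀ n, x n 0 = 0)
    (hinf : ∀ n, Tendsto (x n) atTop atTop)
    (hcont : Continuous (x 0))
    (hunif : ∀ C : Set ℝ≥0, IsCompact C → TendstoUniformlyOn (fun n => x n) (x 0) atTop C)
    (m : ℕ → Measure (ℝ≥0 × E))
    (hradon : ∀ n, ∀ C : Set (ℝ≥0 × E), IsCompact C → m n C < ⊤)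
    (hvague : ∀ g : ℝ≥0 × E → ℝ, Continuous g → HasCompactSupport g → (∀ p, 0 ≤ g p) →
      Tendsto (fun n => ∫ p, g p ∂(m n)) atTop (𝓝 (∫ p, g p ∂(m 0))))
    (f : ℝ≥0 × E → ℝ) (hf : Continuous f) (hfc : HasCompactSupport f)
    (hfpos : ∀ p, 0 ≤ f p) :
    Tendsto (fun n => ∫ p, f (x n p.1, p.2) ∂(m n)) atTop
      (𝓝 (∫ p, f (x 0 p.1, p.2) ∂(m 0))) :=
  statement13_general x hmono hinf hcont hunif m hradon hvague f hf hfc hfpos
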